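/- There exists a finite simple connected graph G with at least two vertices such that μ(G) > max over all pairs of adjacent vertices v_i ~ v_j of G of 2·(m_i + m_j) − 4·m_i·m_j/(d_i + d_j). (This disproves conjectured edge-maximum bound 51 of Brankov, Hansen and Stevanović.) -/

import Mathlib

noncomputable section

open Finset

/-- The degree of a vertex, as a real number. -/
def degR {V : Type*} [Fintype V] (G : SimpleGraph V) (v : V) : ℝ :=
  letI := Classical.decRel G.Adj
  (G.degree v : ℝ)

/-- The average degree of the neighbours of a vertex, as a real number:
`m_v = (∑_{u ~ v} d_u) / d_v`. -/
def avgDegR {V : Type*} [Fintype V] (G : SimpleGraph V) (v : V) : ℝ :=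
  letI := Classical.decRel G.Adj
  (∑ u ∈ G.neighborFinset v, (G.degree u : ℝ)) / (G.degree v : ℝ)

/-- The largest eigenvalue of the Laplacian matrix `L = D - A` of a finite graph. -/
def lapSpecRad {V : Type*} [Fintype V] [DecidableEq V] [Nonempty V]
    (G : SimpleGraph V) : ℝ :=
  letI := Classical.decRel G.Adj
  ⨆ i, (SimpleGraph.posSemidef_lapMatrix ℝ G).isHermitian.eigenvalues i

/-!
The counterexamples are the windmill graphs `K₁ ∨ kK₃`, `k ≥ 5`: a hub joined to every vertex
of `k` disjoint triangles. A universal vertex `v` of an `n`-vertex graph makes `n` a Laplacian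
eigenvalue, with eigenvector `n • e_v - 𝟙`, so `μ ≥ 3k + 1`. The hub has degree `3k` and
neighbour average `3`, every other vertex has degree `3` and neighbour average `k + 2`. On an
edge at the hub the bound is `2(k + 5) - 4(k + 2)/(k + 1)`, which is below `3k + 1` as soon as
`k² - 4k - 1 > 0`; on a triangle edge it is negative.
-/

open Matrix SimpleGraph

section LaplacianSpectralRadius

variable {V : Type*} [Fintype V]

lemma degR_eq_degree (G : SimpleGraph V) [DecidableRel G.Adj] (v : V) :
    degR G v = G.degree v := by
  unfold degR
  congr!

lemma avgDegR_eq (G : SimpleGraph V) [DecidableRel G.Adj] (v : V) :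
    avgDegR G v = (∑ u ∈ G.neighborFinset v, (G.degree u : ℝ)) / G.degree v := by
  unfold avgDegR
  congr!

variable [DecidableEq V]

lemma lapSpecRad_eq_iSup [Nonempty V] (G : SimpleGraph V) [DecidableRel G.Adj] :
    lapSpecRad G = ⨆ i, (G.posSemidef_lapMatrix ℝ).isHermitian.eigenvalues i := by
  unfold lapSpecRad
  congr!

lemma le_lapSpecRad_of_mulVec_eq_smul [Nonempty V] (G : SimpleGraph V) [DecidableRel G.Adj]
    {μ : ℝ} {x : V → ℝ} (hx : x ≠ 0) (h : G.lapMatrix ℝ *ᵥ x = μ • x) : μ ≤ lapSpecRad G := by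
  have hμ : μ ∈ spectrum ℝ (G.lapMatrix ℝ) := by
    rw [← AlgEquiv.spectrum_eq Matrix.toLinAlgEquiv', ← Module.End.hasEigenvalue_iff_mem_spectrum]
    exact Module.End.hasEigenvalue_of_hasEigenvector ⟨Module.End.mem_eigenspace_iff.2 h, hx⟩
  obtain ⟨i, rfl⟩ :=
    (G.posSemidef_lapMatrix ℝ).isHermitian.spectrum_real_eq_range_eigenvalues ▸ hμ
  exact lapSpecRad_eq_iSup G ▸ le_ciSup (Set.finite_range _).bddAbove i

namespace SimpleGraph.IsUniversal

variable {G : SimpleGraph V} [DecidableRel G.Adj] {v : V}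

lemma lapMatrix_mulVec_single (hv : G.IsUniversal v) :
    G.lapMatrix ℝ *ᵥ Pi.single v 1 = Pi.single v (Fintype.card V : ℝ) - 1 := by
  have hdeg : G.degree v = Fintype.card V - 1 := (G.degree_eq_card_sub_one v).2 hv
  have hcard : 1 ≤ Fintype.card V := Fintype.card_pos_iff.2 ⟨v⟩
  ext w
  rcases eq_or_ne w v with rfl | hwv
  · simp [lapMatrix, degMatrix, hdeg, hcard]
  · simp [lapMatrix, degMatrix, hwv, hv hwv.symm, G.adj_comm w v]

lemma lapMatrix_mulVec (hv : G.IsUniversal v) :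
    G.lapMatrix ℝ *ᵥ (Pi.single v (Fintype.card V : ℝ) - 1) =
      (Fintype.card V : ℝ) • (Pi.single v (Fintype.card V : ℝ) - 1) := by
  have hconst : G.lapMatrix ℝ *ᵥ 1 = 0 := G.lapMatrix_mulVec_const_eq_zero
  calc G.lapMatrix ℝ *ᵥ (Pi.single v (Fintype.card V : ℝ) - 1)
      = (Fintype.card V : ℝ) • G.lapMatrix ℝ *ᵥ Pi.single v 1 := by
        rw [mulVec_sub, hconst, sub_zero, ← mulVec_smul, ← Pi.single_smul, smul_eq_mul, mul_one]
    _ = _ := by rw [hv.lapMatrix_mulVec_single]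

lemma card_le_lapSpecRad [Nontrivial V] (hv : G.IsUniversal v) :
    (Fintype.card V : ℝ) ≤ lapSpecRad G := by
  refine le_lapSpecRad_of_mulVec_eq_smul G (fun h => ?_) hv.lapMatrix_mulVec
  obtain ⟨w, hwv⟩ := exists_ne v
  simpa [hwv] using congrFun h w

end SimpleGraph.IsUniversal

end LaplacianSpectralRadius

def bound51 (di mi dj mj : ℝ) : ℝ :=
  2 * (mi + mj) - 4 * mi * mj / (di + dj)

/-- The vertex `none` is the hub, and `some (a, i)` is vertex `i` of triangle `a`. -/
def windmill (k : ℕ) : SimpleGraph (Option (Fin k × Fin 3)) :=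
  SimpleGraph.fromRel fun x y => x = none ∨ x.map Prod.fst = y.map Prod.fst

instance (k : ℕ) : DecidableRel (windmill k).Adj := fun x y =>
  inferInstanceAs (Decidable (x ≠ y ∧ _))

namespace windmill

variable {k : ℕ}

lemma isUniversal_none : (windmill k).IsUniversal none := fun w hw => by
  simp [windmill, hw]

lemma adj_some_some {a b : Fin k} {i j : Fin 3} :
    (windmill k).Adj (some (a, i)) (some (b, j)) ↔ a = b ∧ i ≠ j := by
  simp only [windmill, fromRel_adj]
  grind

lemma neighborFinset_some (a : Fin k) (i : Fin 3) :
    (windmill k).neighborFinset (some (a, i)) =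
      insert none ((univ.erase i).map
        ⟨fun j => some (a, j), (Option.some_injective _).comp (Prod.mk_right_injective a)⟩) := by
  ext (_ | ⟨b, j⟩)
  · simpa using (isUniversal_none (Option.some_ne_none (a, i)).symm).symm
  · simp [adj_some_some]
    grind

lemma degree_none : (windmill k).degree none = 3 * k := by
  rw [(degree_eq_card_sub_one _ _).2 isUniversal_none]
  simp [mul_comm]

lemma degree_some (p : Fin k × Fin 3) : (windmill k).degree (some p) = 3 := by
  rw [← card_neighborFinset_eq_degree, neighborFinset_some]
  simp

lemma degR_none : degR (windmill k) none = 3 * k := by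
  simp [degR_eq_degree, degree_none]

lemma degR_some (p : Fin k × Fin 3) : degR (windmill k) (some p) = 3 := by
  simp [degR_eq_degree, degree_some]

lemma avgDegR_none (hk : k ≠ 0) : avgDegR (windmill k) none = 3 := by
  rw [avgDegR_eq, (neighborFinset_eq_erase_univ _ _).2 isUniversal_none,
    sum_erase_eq_sub (mem_univ _), Fintype.sum_option]
  simp [degree_some, degree_none]
  field_simp

lemma avgDegR_some (p : Fin k × Fin 3) : avgDegR (windmill k) (some p) = k + 2 := by
  rw [avgDegR_eq, neighborFinset_some, sum_insert (by simp)]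
  simp [degree_some, degree_none]
  ring

lemma three_mul_add_one_le_lapSpecRad (hk : k ≠ 0) : 3 * k + 1 ≤ lapSpecRad (windmill k) := by
  have : NeZero k := ⟨hk⟩
  simpa [mul_comm] using isUniversal_none.card_le_lapSpecRad (G := windmill k)

lemma bound51_lt_lapSpecRad (hk : 5 ≤ k) {x y : Option (Fin k × Fin 3)}
    (hxy : (windmill k).Adj x y) :
    bound51 (degR (windmill k) x) (avgDegR (windmill k) x) (degR (windmill k) y)
      (avgDegR (windmill k) y) < lapSpecRad (windmill k) := by
  have hk₀ : k ≠ 0 := by omega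
  have hk₅ : (5 : ℝ) ≤ k := by exact_mod_cast hk
  refine lt_of_lt_of_le ?_ (three_mul_add_one_le_lapSpecRad hk₀)
  rcases x with _ | p <;> rcases y with _ | q
  · exact absurd rfl hxy.ne
  all_goals
    simp only [bound51, degR_none, degR_some, avgDegR_none hk₀, avgDegR_some]
    rw [sub_lt_comm, lt_div_iff₀ (by positivity)]
    nlinarith

end windmill

/-- There exists a finite simple connected graph `G` with at least two vertices whose
Laplacian spectral radius exceeds the conjectured edge-maximum bound. -/
theorem exists_counterexample_bound51 :
    ∃ (V : Type) (_ : Fintype V) (_ : DecidableEq V) (_ : Nonempty V)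
      (G : SimpleGraph V), G.Connected ∧ 2 ≤ Fintype.card V ∧
      ∀ i j : V, G.Adj i j →
        (fun di mi dj mj => 2 * (mi + mj) - 4 * mi * mj / (di + dj))
          (degR G i) (avgDegR G i) (degR G j) (avgDegR G j) < lapSpecRad G := by
  refine ⟨_, inferInstance, inferInstance, inferInstance, windmill 5,
    .of_isUniversal windmill.isUniversal_none, by simp, ?_⟩
  exact fun i j => windmill.bound51_lt_lapSpecRad le_rfl
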